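/- arXiv:1908.08474 — 10 statements merged into one kernel-verified Lean document; each statement's English description precedes it below -/
import Mathlib

section
/- BShap is a limit of CES: Let N be a finite set of features, f : (N → ℝ) → ℝ any model, and x, x' : N → ℝ with x i ≠ x' i for every i ∈ N. For ε ∈ (0,1) let D_ε be the product probability distribution on N → ℝ under which, independently for each feature i, the value equals x i with probability ε and equals x' i with probability 1 − ε. Then for every feature i, ces_i(x, D_ε, f) → bs_i(x, x', f) as ε → 0⁺. -/
/-! Write `y_A` for the point agreeing with `x` exactly on `A`; since `x` and `x'` differ in every
coordinate, `A ↦ y_A` is injective and `D_ε(y_A) = ε ^ |A| (1 - ε) ^ (n - |A|)`. Conditioning on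
agreement with `x` on `S` restricts to the `y_A` with `S ⊆ A`, and after dividing by `ε ^ |S|` the
conditional expectation is a ratio of polynomials in `ε` whose value at `0` is `f y_S / 1`, the
baseline value of `S`. The Shapley value is linear in the `v(S)`, so the limits pass through it. -/

open scoped Classical

noncomputable def shapley {N : Type*} [Fintype N] [DecidableEq N]
    (v : Finset N → ℝ) (i : N) : ℝ :=
  ∑ S ∈ (Finset.univ.erase i).powerset,
    ((S.card.factorial : ℝ) * ((Fintype.card N - S.card - 1).factorial) /
      (Fintype.card N).factorial) * (v (insert i S) - v S)


noncomputable def bshap {N : Type*} [Fintype N] [DecidableEq N]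
    (x x' : N → ℝ) (f : (N → ℝ) → ℝ) (i : N) : ℝ :=
  shapley (fun S => f (fun j => if j ∈ S then x j else x' j)) i


noncomputable def condExp {N : Type*} [Fintype N] [DecidableEq N]
    (T : Finset (N → ℝ)) (p : (N → ℝ) → ℝ) (f : (N → ℝ) → ℝ)
    (x : N → ℝ) (S : Finset N) : ℝ :=
  (∑ t ∈ T.filter fun t => ∀ j ∈ S, t j = x j, p t * f t) /
  (∑ t ∈ T.filter fun t => ∀ j ∈ S, t j = x j, p t)

noncomputable def ces {N : Type*} [Fintype N] [DecidableEq N]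
    (T : Finset (N → ℝ)) (p : (N → ℝ) → ℝ) (x : N → ℝ)
    (f : (N → ℝ) → ℝ) (i : N) : ℝ :=
  shapley (fun S => condExp T p f x S) i


open Filter Topology Finset

theorem tendsto_shapley {N α : Type*} [Fintype N] [DecidableEq N] {l : Filter α}
    {v : α → Finset N → ℝ} {w : Finset N → ℝ} (h : ∀ S, Tendsto (fun a => v a S) l (𝓝 (w S)))
    (i : N) : Tendsto (fun a => shapley (v a) i) l (𝓝 (shapley w i)) :=
  tendsto_finsetSum _ fun S _ => ((h (insert i S)).sub (h S)).const_mul _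

theorem condExp_image {N ι : Type*} [Fintype N] [DecidableEq N] [DecidableEq (N → ℝ)]
    {s : Finset ι} {y : ι → N → ℝ} (hy : Set.InjOn y s) (p f : (N → ℝ) → ℝ) (x : N → ℝ)
    (S : Finset N) :
    condExp (s.image y) p f x S =
      (∑ a ∈ s with ∀ j ∈ S, y a j = x j, p (y a) * f (y a)) /
        ∑ a ∈ s with ∀ j ∈ S, y a j = x j, p (y a) := by
  have hy' : Set.InjOn y (s.filter fun a => ∀ j ∈ S, y a j = x j) :=
    hy.mono (coe_subset.2 (filter_subset _ _))
  rw [condExp, filter_image, sum_image hy', sum_image hy']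

theorem piecewise_eq_left_iff {N β : Type*} [DecidableEq N] {x x' : N → β} (A : Finset N)
    {j : N} (hj : x j ≠ x' j) : A.piecewise x x' j = x j ↔ j ∈ A := by
  by_cases hA : j ∈ A <;> simp [hA, hj.symm]

theorem piecewise_injective {N β : Type*} [DecidableEq N] {x x' : N → β}
    (hxx' : ∀ j, x j ≠ x' j) : Function.Injective fun A : Finset N => A.piecewise x x' :=
  fun A B (h : A.piecewise x x' = B.piecewise x x') => ext fun j => by
    rw [← piecewise_eq_left_iff A (hxx' j), ← piecewise_eq_left_iff B (hxx' j), h]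

theorem prod_ite_mem_eq_pow_mul_pow {N M : Type*} [Fintype N] [DecidableEq N] [CommMonoid M]
    (A : Finset N) (a b : M) :
    ∏ j, (if j ∈ A then a else b) = a ^ #A * b ^ (Fintype.card N - #A) := by
  rw [prod_ite, prod_const, prod_const, filter_mem_eq_inter, univ_inter, filter_not,
    filter_mem_eq_inter, univ_inter, card_sdiff_of_subset (subset_univ A), card_univ]

theorem condExp_piecewise {N : Type*} [Fintype N] [DecidableEq N] {x x' : N → ℝ}
    (hxx' : ∀ j, x j ≠ x' j) (f : (N → ℝ) → ℝ) (ε : ℝ) (S : Finset N) :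
    condExp (univ.powerset.image fun A => A.piecewise x x')
        (fun t => ∏ j, if t j = x j then ε else 1 - ε) f x S =
      (∑ A with S ⊆ A, ε ^ #A * (1 - ε) ^ (Fintype.card N - #A) * f (A.piecewise x x')) /
        ∑ A with S ⊆ A, ε ^ #A * (1 - ε) ^ (Fintype.card N - #A) := by
  simp only [condExp_image (piecewise_injective hxx').injOn, piecewise_eq_left_iff _ (hxx' _),
    ← subset_iff, powerset_univ, prod_ite_mem_eq_pow_mul_pow]

theorem tendsto_sum_pow_mul_div_sum_pow {ι : Type*} {s : Finset ι} {a : ι} (ha : a ∈ s)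
    {k m : ι → ℕ} (hk : ∀ b ∈ s, b ≠ a → k a < k b) (g : ι → ℝ) :
    Tendsto (fun ε : ℝ => (∑ b ∈ s, ε ^ k b * (1 - ε) ^ m b * g b) /
        ∑ b ∈ s, ε ^ k b * (1 - ε) ^ m b) (𝓝[>] 0) (𝓝 (g a)) := by
  have hk_le : ∀ b ∈ s, k a ≤ k b := fun b hb =>
    if hba : b = a then hba ▸ le_rfl else (hk b hb hba).le
  set F : (ι → ℝ) → ℝ → ℝ := fun c ε => ∑ b ∈ s, ε ^ (k b - k a) * (1 - ε) ^ m b * c b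
  have hF : ∀ c ε, ∑ b ∈ s, ε ^ k b * (1 - ε) ^ m b * c b = ε ^ k a * F c ε := fun c ε => by
    rw [mul_sum]
    refine sum_congr rfl fun b hb => ?_
    rw [← mul_assoc, ← mul_assoc, ← pow_add, Nat.add_sub_cancel' (hk_le b hb)]
  have hF_zero : ∀ c, F c 0 = c a := fun c => by
    refine (sum_eq_single_of_mem a ha fun b hb hba => ?_).trans (by simp)
    simp [(Nat.sub_pos_of_lt (hk b hb hba)).ne']
  have hF_cont : ∀ c, Continuous (F c) := fun c => by fun_prop
  have hlim := ((hF_cont g).tendsto 0).div ((hF_cont 1).tendsto 0) (by simp [hF_zero])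
  rw [hF_zero, hF_zero, Pi.one_apply, div_one] at hlim
  refine (hlim.mono_left nhdsWithin_le_nhds).congr' ?_
  filter_upwards [self_mem_nhdsWithin] with ε (hε : 0 < ε)
  have hden : ∑ b ∈ s, ε ^ k b * (1 - ε) ^ m b = ε ^ k a * F 1 ε := by simpa using hF 1 ε
  rw [Pi.div_apply, hF, hden, mul_div_mul_left _ _ (pow_ne_zero _ hε.ne')]

/-- **BShap is a limit of CES** (Lemma 3 of the paper): with the product
distribution `D_ε` in which each feature `i` independently equals `x i` with
probability `ε` and `x' i` with probability `1 - ε`, the CES attribution of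
every feature tends to its BShap attribution as `ε → 0⁺`. -/
theorem bshap_is_limit_of_ces {N : Type*} [Fintype N] [DecidableEq N]
    (f : (N → ℝ) → ℝ) (x x' : N → ℝ) (hxx' : ∀ i, x i ≠ x' i) (i : N) :
    Filter.Tendsto
      (fun ε : ℝ =>
        ces (Finset.image
              (fun S : Finset N => fun j => if j ∈ S then x j else x' j)
              Finset.univ.powerset)
            (fun t => ∏ j, if t j = x j then ε else 1 - ε)
            x f i)
      (nhdsWithin 0 (Set.Ioi 0))
      (nhds (bshap x x' f i)) := by
  refine tendsto_shapley (fun S => ?_) i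
  have hS : S ∈ univ.filter (S ⊆ ·) := mem_filter.2 ⟨mem_univ S, subset_rfl⟩
  have hcard : ∀ A ∈ univ.filter (S ⊆ ·), A ≠ S → #S < #A := fun A hA hAS =>
    card_lt_card ((mem_filter.1 hA).2.ssubset_of_ne hAS.symm)
  exact (tendsto_sum_pow_mul_div_sum_pow hS hcard _).congr fun ε =>
    (condExp_piecewise hxx' f ε S).symm
end

section
/- RBShap coincides with CES for independent feature distributions: Let N be a finite set of features and let D be a product probability distribution on N → ℝ (the features are independent), where each marginal D_i is finitely supported, and suppose D_i(x i) > 0 for every i. Then for every model f : (N → ℝ) → ℝ and every subset S ⊆ N, E_{x'∼D}[f(y_S)] = E_{t∼D}[f(t) | t agrees with x on S], where y_S agrees with x on S and with x' off S; consequently rbs_i(x, D, f) = ces_i(x, D, f) for every feature i. -/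
open scoped Classical

noncomputable def rbs {N : Type*} [Fintype N] [DecidableEq N]
    (T : Finset (N → ℝ)) (p : (N → ℝ) → ℝ) (x : N → ℝ)
    (f : (N → ℝ) → ℝ) (i : N) : ℝ :=
  shapley (fun S => ∑ t ∈ T, p t * f (fun j => if j ∈ S then x j else t j)) i


/-- **RBShap coincides with CES for independent feature distributions**
(Lemma 4 of the paper): if the features are distributed independently, each
with a finitely supported marginal that puts positive mass on the explicand's
value, then the RBShap set function equals the CES set function on every
subset of features, and consequently the RBShap attributions coincide with the
CES attributions. -/
theorem rbs_eq_ces_of_independent {N : Type*} [Fintype N] [DecidableEq N]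
    (Ti : N → Finset ℝ) (pi : N → ℝ → ℝ)
    (hpos : ∀ i, ∀ a ∈ Ti i, 0 < pi i a)
    (hsum : ∀ i, ∑ a ∈ Ti i, pi i a = 1)
    (x : N → ℝ) (hx : ∀ i, x i ∈ Ti i)
    (f : (N → ℝ) → ℝ) :
    (∀ S : Finset N,
      (∑ t ∈ Fintype.piFinset Ti,
          (∏ j, pi j (t j)) * f (fun j => if j ∈ S then x j else t j)) =
        condExp (Fintype.piFinset Ti) (fun t => ∏ j, pi j (t j)) f x S) ∧
    (∀ i, rbs (Fintype.piFinset Ti) (fun t => ∏ j, pi j (t j)) x f i =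
          ces (Fintype.piFinset Ti) (fun t => ∏ j, pi j (t j)) x f i) := by
  have key : ∀ S : Finset N,
      (∑ t ∈ Fintype.piFinset Ti,
          (∏ j, pi j (t j)) * f (fun j => if j ∈ S then x j else t j)) =
        condExp (Fintype.piFinset Ti) (fun t => ∏ j, pi j (t j)) f x S := by
    intro S
    let P := Fintype.piFinset Ti
    let p : (N → ℝ) → ℝ := fun t => ∏ j, pi j (t j)
    let φ : (N → ℝ) → (N → ℝ) := fun t j => if j ∈ S then x j else t j
    let A := P.filter (fun t => ∀ j ∈ S, t j = x j)
    let c := ∏ j ∈ S, pi j (x j)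
    have hcpos : 0 < c := Finset.prod_pos fun j _ => hpos j (x j) (hx j)
    have hAeq : A = Fintype.piFinset (fun j => if j ∈ S then {x j} else Ti j) := by
      ext t
      simp only [A, P, Finset.mem_filter, Fintype.mem_piFinset]
      constructor
      · rintro ⟨h1, h2⟩ j
        by_cases hj : j ∈ S <;> simp [hj, h1 j, h2 j]
      · intro h
        constructor
        · intro j
          have := h j
          by_cases hj : j ∈ S
          · simp only [hj, if_true, Finset.mem_singleton] at this
            rw [this]; exact hx j
          · simpa [hj] using this
        · intro j hj; have := h j; simpa [hj] using this
    have hden : ∑ u ∈ A, p u = c := by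
      rw [hAeq]
      show ∑ u ∈ Fintype.piFinset (fun j => if j ∈ S then ({x j} : Finset ℝ) else Ti j), ∏ j, pi j (u j) = c
      rw [← Finset.prod_univ_sum]
      have : ∀ j, (∑ a ∈ (if j ∈ S then ({x j} : Finset ℝ) else Ti j), pi j a)
          = if j ∈ S then pi j (x j) else 1 := by
        intro j; by_cases hj : j ∈ S <;> simp [hj, hsum j]
      rw [Finset.prod_congr rfl (fun j _ => this j)]
      rw [Finset.prod_ite_mem, Finset.univ_inter]
    have hmaps : ∀ t ∈ P, φ t ∈ A := by
      intro t ht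
      simp only [A, P, Finset.mem_filter, Fintype.mem_piFinset] at *
      constructor
      · intro j
        by_cases hj : j ∈ S
        · simpa [φ, hj] using hx j
        · simpa [φ, hj] using ht j
      · intro j hj; simp [φ, hj]
    have hfiber : ∀ u ∈ A, ∑ t ∈ P.filter (fun t => φ t = u), p t
        = ∏ j ∈ Sᶜ, pi j (u j) := by
      intro u hu
      have huA := hu
      simp only [A, P, Finset.mem_filter, Fintype.mem_piFinset] at huA
      obtain ⟨huP, huS⟩ := huA
      have hfil : P.filter (fun t => φ t = u)
          = Fintype.piFinset (fun j => if j ∈ S then Ti j else {u j}) := by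
        ext t
        simp only [P, Finset.mem_filter, Fintype.mem_piFinset]
        constructor
        · rintro ⟨h1, h2⟩ j
          by_cases hj : j ∈ S
          · simpa [hj] using h1 j
          · have : φ t j = u j := by rw [h2]
            simp only [φ, hj, if_false] at this
            simp [hj, this]
        · intro h
          constructor
          · intro j
            have := h j
            by_cases hj : j ∈ S
            · simpa [hj] using this
            · simp only [hj, if_false, Finset.mem_singleton] at this
              rw [this]; exact huP j
          · funext j
            have := h j
            by_cases hj : j ∈ S
            · simp [φ, hj, huS j hj]
            · simp only [hj, if_false, Finset.mem_singleton] at this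
              simp [φ, hj, this]
      rw [hfil]
      show ∑ t ∈ Fintype.piFinset (fun j => if j ∈ S then Ti j else ({u j} : Finset ℝ)), ∏ j, pi j (t j) = ∏ j ∈ Sᶜ, pi j (u j)
      rw [← Finset.prod_univ_sum]
      have : ∀ j, (∑ a ∈ (if j ∈ S then Ti j else ({u j} : Finset ℝ)), pi j a)
          = if j ∈ S then 1 else pi j (u j) := by
        intro j; by_cases hj : j ∈ S <;> simp [hj, hsum j]
      rw [Finset.prod_congr rfl (fun j _ => this j)]
      have h2 : ∀ j, (if j ∈ S then 1 else pi j (u j))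
          = (if j ∈ Sᶜ then pi j (u j) else 1) := by
        intro j; by_cases hj : j ∈ S <;> simp [hj]
      rw [Finset.prod_congr rfl (fun j _ => h2 j), Finset.prod_ite_mem,
        Finset.univ_inter]
    have hsplit : ∀ u ∈ A, p u = c * ∏ j ∈ Sᶜ, pi j (u j) := by
      intro u hu
      have huS := (Finset.mem_filter.mp hu).2
      show ∏ j, pi j (u j) = _
      rw [← Finset.prod_mul_prod_compl S (fun j => pi j (u j))]
      congr 1
      exact Finset.prod_congr rfl fun j hj => by rw [huS j hj]
    calc ∑ t ∈ P, p t * f (φ t)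
        = ∑ u ∈ A, ∑ t ∈ P.filter (fun t => φ t = u), p t * f (φ t) :=
          (Finset.sum_fiberwise_of_maps_to hmaps _).symm
      _ = ∑ u ∈ A, (∏ j ∈ Sᶜ, pi j (u j)) * f u := by
            refine Finset.sum_congr rfl fun u hu => ?_
            rw [← hfiber u hu, Finset.sum_mul]
            exact Finset.sum_congr rfl fun t ht => by
              rw [(Finset.mem_filter.mp ht).2]
      _ = (∑ u ∈ A, p u * f u) / c := by
            rw [Finset.sum_div]
            refine Finset.sum_congr rfl fun u hu => ?_
            rw [hsplit u hu]
            field_simp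
      _ = condExp P p f x S := by rw [condExp, hden]
  refine ⟨key, fun i => ?_⟩
  unfold rbs ces
  congr 1
  exact funext key
end

section
/- BShap satisfies Symmetry: if f : (N → ℝ) → ℝ is symmetric in features i and j (i.e., f(y) = f(y with the values of coordinates i and j swapped) for all y), and the explicand and baseline satisfy x i = x j and x' i = x' j, then bs_i(x, x', f) = bs_j(x, x', f). -/
open scoped Classical

private lemma bshap_key {N : Type*} [Fintype N] [DecidableEq N]
    (f : (N → ℝ) → ℝ) (i j : N)
    (hsym : ∀ y : N → ℝ, f y = f (y ∘ Equiv.swap i j))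
    (x x' : N → ℝ) (hx : x i = x j) (hx' : x' i = x' j)
    (A : Finset N) :
    f (fun k => if k ∈ A.image (Equiv.swap i j) then x k else x' k)
      = f (fun k => if k ∈ A then x k else x' k) := by
  rw [hsym]
  congr 1
  funext k
  have hmem : Equiv.swap i j k ∈ A.image (Equiv.swap i j) ↔ k ∈ A := by
    simp [Finset.mem_image, (Equiv.swap i j).injective.eq_iff]
  have hxk : x (Equiv.swap i j k) = x k := by
    rcases eq_or_ne k i with rfl | hki
    · simp [Equiv.swap_apply_left, hx]
    rcases eq_or_ne k j with rfl | hkj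
    · simp [Equiv.swap_apply_right, hx]
    · simp [Equiv.swap_apply_of_ne_of_ne hki hkj]
  have hx'k : x' (Equiv.swap i j k) = x' k := by
    rcases eq_or_ne k i with rfl | hki
    · simp [Equiv.swap_apply_left, hx']
    rcases eq_or_ne k j with rfl | hkj
    · simp [Equiv.swap_apply_right, hx']
    · simp [Equiv.swap_apply_of_ne_of_ne hki hkj]
  simp only [Function.comp_apply]
  rw [if_congr hmem rfl rfl, hxk, hx'k]

/-- **BShap satisfies Symmetry**: if `f` is symmetric in features `i` and `j`,
and the explicand and baseline each take equal values on `i` and `j`, then the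
two features get equal attributions. -/
theorem bshap_symmetry {N : Type*} [Fintype N] [DecidableEq N]
    (f : (N → ℝ) → ℝ) (i j : N)
    (hsym : ∀ y : N → ℝ, f y = f (y ∘ Equiv.swap i j))
    (x x' : N → ℝ) (hx : x i = x j) (hx' : x' i = x' j) :
    bshap x x' f i = bshap x x' f j := by
  unfold bshap shapley
  refine Finset.sum_bij' (fun S _ => S.image (Equiv.swap i j))
    (fun S _ => S.image (Equiv.swap i j)) ?_ ?_ ?_ ?_ ?_
  · intro S hS
    simp only [Finset.mem_powerset, Finset.subset_erase, Finset.subset_univ,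
      true_and, Finset.mem_image, not_exists] at hS ⊢
    rintro b ⟨hb, h⟩
    have : b = i := (Equiv.swap i j).injective (h.trans (Equiv.swap_apply_left i j).symm)
    exact hS (this ▸ hb)
  · intro S hS
    simp only [Finset.mem_powerset, Finset.subset_erase, Finset.subset_univ,
      true_and, Finset.mem_image, not_exists] at hS ⊢
    rintro b ⟨hb, h⟩
    have : b = j := (Equiv.swap i j).injective (h.trans (Equiv.swap_apply_right i j).symm)
    exact hS (this ▸ hb)
  · intro S hS
    rw [Finset.image_image]
    have : (Equiv.swap i j : N → N) ∘ (Equiv.swap i j) = id := by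
      funext k; simp
    simp [this]
  · intro S hS
    rw [Finset.image_image]
    have : (Equiv.swap i j : N → N) ∘ (Equiv.swap i j) = id := by
      funext k; simp
    simp [this]
  · intro S hS
    dsimp only
    have hcard : (S.image (Equiv.swap i j)).card = S.card :=
      Finset.card_image_of_injective _ (Equiv.swap i j).injective
    have hins : insert j (S.image (Equiv.swap i j)) = (insert i S).image (Equiv.swap i j) := by
      rw [Finset.image_insert, Equiv.swap_apply_left]
    rw [hcard, hins, bshap_key f i j hsym x x' hx hx',
      bshap_key f i j hsym x x' hx hx']
end

section
/- BShap satisfies Demand Monotonicity: suppose f : (N → ℝ) → ℝ is nondecreasing in feature i, i.e., a ≤ b implies f(y with coordinate i set to a) ≤ f(y with coordinate i set to b) for all y. If explicands x and x̂ agree on all features except i and x i ≤ x̂ i, then for every baseline x', bs_i(x, x', f) ≤ bs_i(x̂, x', f). -/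
open scoped Classical

theorem shapley_le_shapley_of_marginal_le {N : Type*} [Fintype N] [DecidableEq N] {v w : Finset N → ℝ} {i : N}
    (h : ∀ S, i ∉ S → v (insert i S) - v S ≤ w (insert i S) - w S) :
    shapley v i ≤ shapley w i := by
  unfold shapley
  refine Finset.sum_le_sum fun S hS => mul_le_mul_of_nonneg_left (h S ?_) (by positivity)
  exact fun hi => by simpa using Finset.mem_powerset.mp hS hi

theorem bshap_eq_shapley_piecewise {N : Type*} [Fintype N] [DecidableEq N]
    (x x' : N → ℝ) (f : (N → ℝ) → ℝ) (i : N) :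
    bshap x x' f i = shapley (fun S => f (S.piecewise x x')) i :=
  rfl

/-- **BShap satisfies Demand Monotonicity**: if `f` is nondecreasing in
feature `i`, then increasing the explicand's value of feature `i` (holding all
else fixed) can only increase feature `i`'s attribution. -/
theorem bshap_demand_monotonicity {N : Type*} [Fintype N] [DecidableEq N]
    (f : (N → ℝ) → ℝ) (i : N)
    (hmono : ∀ (y : N → ℝ) (a b : ℝ), a ≤ b →
      f (Function.update y i a) ≤ f (Function.update y i b))
    (x xhat x' : N → ℝ)
    (hagree : ∀ j, j ≠ i → x j = xhat j)
    (hle : x i ≤ xhat i) :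
    bshap x x' f i ≤ bshap xhat x' f i := by
  rw [bshap_eq_shapley_piecewise, bshap_eq_shapley_piecewise]
  refine shapley_le_shapley_of_marginal_le fun S hiS => ?_
  have hoff : S.piecewise x x' = S.piecewise xhat x' :=
    Finset.piecewise_congr _ (fun j hj => hagree j (ne_of_mem_of_not_mem hj hiS)) fun _ _ => rfl
  simp only [Finset.piecewise_insert, hoff]
  exact sub_le_sub_right (hmono _ _ _ hle) _
end

section
/- Sparsity makes CES attributions uniform: Let N be a finite set of n ≥ 1 features, T a finite nonempty set of feature vectors, x ∈ T an explicand, and suppose every feature value of x is unique in T, i.e., for every t ∈ T with t ≠ x and every feature i, t i ≠ x i. Let D̂ be the uniform distribution on T. Then for every model f : (N → ℝ) → ℝ and every feature i, ces_i(x, D̂, f) = (f(x) − (1/|T|)·∑_{t ∈ T} f(t)) / n. In particular all features receive equal CES attributions, regardless of f. -/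
open scoped Classical

/-- **Sparsity makes CES attributions uniform** (Remark 1 of the paper): if
every feature value of the explicand `x` is unique in the training data `T`,
then under the empirical (uniform) distribution on `T`, every feature's CES
attribution equals `(f x - mean of f over T) / |N|`, regardless of `f`. -/
theorem ces_uniform_under_sparsity {N : Type*} [Fintype N] [DecidableEq N]
    [Nonempty N]
    (T : Finset (N → ℝ)) (x : N → ℝ) (hx : x ∈ T)
    (huniq : ∀ t ∈ T, t ≠ x → ∀ i, t i ≠ x i)
    (f : (N → ℝ) → ℝ) (i : N) :
    ces T (fun _ => (T.card : ℝ)⁻¹) x f i =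
      (f x - (∑ t ∈ T, f t) / T.card) / Fintype.card N := by
  have hT : (T.card : ℝ) ≠ 0 := by
    exact_mod_cast (Finset.card_pos.mpr ⟨x, hx⟩).ne'
  -- value of the set function on nonempty sets
  have hfilter : ∀ S : Finset N, S.Nonempty →
      (T.filter fun t => ∀ j ∈ S, t j = x j) = {x} := by
    intro S ⟨j, hj⟩
    ext t
    simp only [Finset.mem_filter, Finset.mem_singleton]
    constructor
    · rintro ⟨ht, hagree⟩
      by_contra hne
      exact huniq t ht hne j (hagree j hj)
    · rintro rfl; exact ⟨hx, fun _ _ => rfl⟩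
  have hvne : ∀ S : Finset N, S.Nonempty →
      condExp T (fun _ => (T.card : ℝ)⁻¹) f x S = f x := by
    intro S hS
    rw [condExp, hfilter S hS]
    simp only [Finset.sum_singleton]
    field_simp
  have hvempty : condExp T (fun _ => (T.card : ℝ)⁻¹) f x ∅ =
      (∑ t ∈ T, f t) / T.card := by
    rw [condExp]
    simp only [Finset.notMem_empty, false_implies, implies_true, Finset.filter_true_of_mem,
      fun t (_ : t ∈ T) => trivial]
    rw [Finset.sum_const, ← Finset.mul_sum]
    field_simp
    rw [nsmul_eq_mul, mul_one_div_cancel hT, mul_one]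
  rw [ces, shapley]
  rw [Finset.sum_eq_single_of_mem (∅ : Finset N)
      (Finset.empty_mem_powerset _)]
  · rw [hvempty, hvne _ (Finset.insert_nonempty i ∅)]
    have hn : 0 < Fintype.card N := Fintype.card_pos
    simp only [Finset.card_empty, Nat.factorial_zero, Nat.sub_zero, Nat.cast_one, one_mul]
    have hfac : (Fintype.card N : ℝ) * (Fintype.card N - 1).factorial =
        (Fintype.card N).factorial := by
      exact_mod_cast Nat.mul_factorial_pred hn.ne'
    have hne : ((Fintype.card N).factorial : ℝ) ≠ 0 := by
      exact_mod_cast (Nat.factorial_pos _).ne'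
    have hnn : (Fintype.card N : ℝ) ≠ 0 := by exact_mod_cast hn.ne'
    rw [div_mul_eq_mul_div, eq_div_iff hnn, div_mul_eq_mul_div,
      div_eq_iff hne, ← hfac]
    ring
  · intro S hS hSne
    have hSnonempty : S.Nonempty := Finset.nonempty_iff_ne_empty.mpr hSne
    rw [hvne _ hSnonempty, hvne _ (Finset.insert_nonempty i S)]
    ring
end

section
/- CES fails Linearity across feature sets: for 0 < ε < 1, let D be the finitely supported probability distribution on ℝ² assigning probability ε to (5,5) and (1−ε)/2 each to (1,1) and (1,2), with marginal D₂ on the second coordinate; let g₁(v) = v², g₂(u) = u, and take the explicand (5,5), which lies in the support of D. Then the two-feature CES attribution of feature 2 for the model f(u, v) = g₁(v) + g₂(u) at (5,5) under D is not equal to the sum of the one-feature CES attribution of g₁ to its variable at explicand 5 under D₂ and the one-feature CES attribution of g₂ to the variable v, which is 0 since g₂ does not reference v. -/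
open scoped Classical

/-- The one-feature CES attribution of a univariate model `g` at explicand `b`
under a finitely supported distribution `(T', p')`: `g b - E[g]`. -/
noncomputable def oneFeatureCes (T' : Finset ℝ) (p' : ℝ → ℝ) (g : ℝ → ℝ) (b : ℝ) : ℝ :=
  g b - ∑ a ∈ T', p' a * g a

/-- **CES fails Linearity across feature sets** (Example 2 / Table 1 of the
paper): with `D` assigning probability `ε` to `(5,5)` and `(1-ε)/2` each to
`(1,1)` and `(1,2)`, `g₁ v = v²`, `g₂ u = u`, and explicand `(5,5)`: the
one-feature CES attribution of `g₁` to its variable (under the second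
marginal, supported on `{5,1,2}`), plus the attribution `0` of the variable
`v` for `g₂` (which does not reference `v`), does not equal the two-feature
CES attribution of feature `v` for the sum model `f (u,v) = g₁ v + g₂ u`. -/
theorem ces_fails_linearity (ε : ℝ) (hε0 : 0 < ε) (hε1 : ε < 1) :
    oneFeatureCes ({5, 1, 2} : Finset ℝ)
        (fun a => if a = 5 then ε else (1 - ε) / 2)
        (fun v => v ^ 2) 5 + 0 ≠
      ces ({![5,5], ![1,1], ![1,2]} : Finset (Fin 2 → ℝ))
        (fun t => if t = ![5,5] then ε else (1 - ε) / 2)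
        ![5,5] (fun t => (fun v : ℝ => v ^ 2) (t 1) + (fun u : ℝ => u) (t 0)) 1 := by
  have h1 : (![5,5] : Fin 2 → ℝ) ≠ ![1,1] := by simp [funext_iff, Fin.forall_fin_two]
  have h2 : (![5,5] : Fin 2 → ℝ) ≠ ![1,2] := by simp [funext_iff, Fin.forall_fin_two]
  have h3 : (![1,1] : Fin 2 → ℝ) ≠ ![1,2] := by simp [funext_iff, Fin.forall_fin_two]
  have hne : ε ≠ 0 := ne_of_gt hε0
  have hpow : ((Finset.univ.erase (1:Fin 2)).powerset : Finset (Finset (Fin 2))) = {∅, {0}} := by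
    decide
  rw [ces, shapley, hpow]
  rw [Finset.sum_insert (by decide), Finset.sum_singleton]
  have hv0 : condExp ({![5,5], ![1,1], ![1,2]} : Finset (Fin 2 → ℝ))
      (fun t => if t = ![5,5] then ε else (1 - ε) / 2)
      (fun t => (fun v : ℝ => v ^ 2) (t 1) + (fun u : ℝ => u) (t 0)) ![5,5] ∅
      = 30*ε + (1-ε)*7/2 := by
    simp [condExp, Finset.filter_insert, Finset.sum_insert, h1, h2, h3, h1.symm, h2.symm, h3.symm]
    ring
  have key : ∀ S : Finset (Fin 2), ((0:Fin 2) ∈ S ∨ (1:Fin 2) ∈ S) →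
      condExp ({![5,5], ![1,1], ![1,2]} : Finset (Fin 2 → ℝ))
      (fun t => if t = ![5,5] then ε else (1 - ε) / 2)
      (fun t => (fun v : ℝ => v ^ 2) (t 1) + (fun u : ℝ => u) (t 0)) ![5,5] S
      = 30 := by
    intro S hS
    have hf1 : ¬ (∀ j ∈ S, (![1,1] : Fin 2 → ℝ) j = ![5,5] j) := by
      intro h; rcases hS with hS | hS
      · have := h 0 hS; norm_num at this
      · have := h 1 hS; norm_num at this
    have hf2 : ¬ (∀ j ∈ S, (![1,2] : Fin 2 → ℝ) j = ![5,5] j) := by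
      intro h; rcases hS with hS | hS
      · have := h 0 hS; norm_num at this
      · have := h 1 hS; norm_num at this
    have hf0 : (∀ j ∈ S, (![5,5] : Fin 2 → ℝ) j = ![5,5] j) := fun j _ => rfl
    have hnS : ¬ ((0:Fin 2) ∉ S ∧ (1:Fin 2) ∉ S) := by tauto
    simp [condExp, Finset.filter_insert, Finset.filter_singleton, hf0, hf1, hf2, h1, h2, h3, h1.symm, h2.symm, h3.symm, hne, hnS]
    norm_num
  have hv1 : condExp ({![5,5], ![1,1], ![1,2]} : Finset (Fin 2 → ℝ))
      (fun t => if t = ![5,5] then ε else (1 - ε) / 2)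
      (fun t => (fun v : ℝ => v ^ 2) (t 1) + (fun u : ℝ => u) (t 0)) ![5,5] (insert 1 ∅)
      = 30 := key _ (Or.inr (by decide))
  have hv2 : condExp ({![5,5], ![1,1], ![1,2]} : Finset (Fin 2 → ℝ))
      (fun t => if t = ![5,5] then ε else (1 - ε) / 2)
      (fun t => (fun v : ℝ => v ^ 2) (t 1) + (fun u : ℝ => u) (t 0)) ![5,5] (insert 1 {0})
      = 30 := key _ (Or.inr (by decide))
  have hv3 : condExp ({![5,5], ![1,1], ![1,2]} : Finset (Fin 2 → ℝ))
      (fun t => if t = ![5,5] then ε else (1 - ε) / 2)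
      (fun t => (fun v : ℝ => v ^ 2) (t 1) + (fun u : ℝ => u) (t 0)) ![5,5] {0}
      = 30 := key _ (Or.inl (by decide))
  rw [hv0, hv1, hv2, hv3]
  simp only [oneFeatureCes]
  rw [Finset.sum_insert (by norm_num), Finset.sum_insert (by norm_num), Finset.sum_singleton]
  norm_num [Fintype.card_fin]
  intro h
  nlinarith [h]
end

section
/- CES fails Demand Monotonicity: Let D be the uniform distribution on the three points (1,1), (1,0), (0,1) in ℝ², and let f(u, v) = 100·u + v, which is nondecreasing in the second feature. Then the CES attribution of the second feature at explicand (1,1) is strictly less than its CES attribution at explicand (1,0), even though the two explicands differ only in the second feature and its value increased from 0 to 1: ces_2((1,1), D, f) < 0 < ces_2((1,0), D, f). -/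
open scoped Classical

/-! Under the uniform distribution, `v S` is the average of `f` over the support points that agree
with the explicand on `S`. At `(1,1)`, conditioning on the second feature alone keeps `(0,1)`, whose
tiny model value drags the average from `202/3` down to `51`; this loss outweighs the gain `1/2`
in the other order, so the attribution is `-95/12`. At `(1,0)` the same conditioning keeps only
`(1,0)`, and the attribution is `193/12`. -/

theorem shapley_fin_two_one (v : Finset (Fin 2) → ℝ) :
    shapley v 1 = ((v {1} - v ∅) + (v Finset.univ - v {0})) / 2 := by
  have hpow : (Finset.univ.erase (1 : Fin 2)).powerset = {∅, {0}} := by decide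
  have hins : (insert 1 {0} : Finset (Fin 2)) = Finset.univ := by decide
  rw [shapley, hpow, Finset.sum_pair (by decide), hins]
  norm_num
  ring

theorem condExp_uniform {N : Type*} [Fintype N] [DecidableEq N] (T : Finset (N → ℝ))
    {c : ℝ} (hc : c ≠ 0) (f : (N → ℝ) → ℝ) (x : N → ℝ) (S : Finset N) :
    condExp T (fun _ => c) f x S =
      (∑ t ∈ T.filter fun t => ∀ j ∈ S, t j = x j, f t) /
        (T.filter fun t => ∀ j ∈ S, t j = x j).card := by
  rw [condExp, ← Finset.mul_sum, Finset.sum_const, nsmul_eq_mul, mul_comm _ c,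
    mul_div_mul_left _ _ hc]

theorem ces_second_feature_at_one_one :
    ces ({![1,1], ![1,0], ![0,1]} : Finset (Fin 2 → ℝ)) (fun _ => (1 : ℝ) / 3)
      ![1,1] (fun t => 100 * t 0 + t 1) 1 = -95 / 12 := by
  rw [ces, shapley_fin_two_one]
  simp only [condExp_uniform _ (by norm_num : (1 : ℝ) / 3 ≠ 0)]
  simp [Finset.filter_insert, Finset.filter_singleton]
  norm_num

theorem ces_second_feature_at_one_zero :
    ces ({![1,1], ![1,0], ![0,1]} : Finset (Fin 2 → ℝ)) (fun _ => (1 : ℝ) / 3)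
      ![1,0] (fun t => 100 * t 0 + t 1) 1 = 193 / 12 := by
  rw [ces, shapley_fin_two_one]
  simp only [condExp_uniform _ (by norm_num : (1 : ℝ) / 3 ≠ 0)]
  simp [Finset.filter_insert, Finset.filter_singleton]
  norm_num

/-- **CES fails Demand Monotonicity** (Table 2 of the paper): for the uniform
distribution on `{(1,1), (1,0), (0,1)}` and the monotone model
`f (u,v) = 100u + v`, increasing the second feature's value from `0` to `1`
(all else fixed) moves its CES attribution from positive to negative. -/
theorem ces_fails_demand_monotonicity :
    ces ({![1,1], ![1,0], ![0,1]} : Finset (Fin 2 → ℝ)) (fun _ => (1 : ℝ) / 3)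
        ![1,1] (fun t => 100 * t 0 + t 1) 1 < 0 ∧
    0 < ces ({![1,1], ![1,0], ![0,1]} : Finset (Fin 2 → ℝ)) (fun _ => (1 : ℝ) / 3)
        ![1,0] (fun t => 100 * t 0 + t 1) 1 := by
  rw [ces_second_feature_at_one_one, ces_second_feature_at_one_zero]
  norm_num
end

section
/- CES fails Symmetry even for independent distributions: Let 0 < p < 1 and 0 < q < 1 with p ≠ q, and let D be the product distribution on ℝ² under which the first feature equals 2 with probability p and 1 with probability 1−p, independently of the second feature which equals 2 with probability q and 1 with probability 1−q. Let f(u, v) = u + v, which is symmetric in the two features. Then for the explicand (2,2) (which has equal values in both features), ces_1((2,2), D, f) = 1 − p and ces_2((2,2), D, f) = 1 − q; since p ≠ q, the two symmetric features receive unequal CES attributions. -/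
open scoped Classical

/-! Since `f` is additive and the two features are independent, conditioning on the observed
set `S` replaces each unobserved feature by its mean, so the value function is additive:
`v S = ∑ j ∈ S, 2 + ∑ j ∉ S, 𝔼 t_j` with `𝔼 t_0 = 1 + p` and `𝔼 t_1 = 1 + q`. The marginal
contribution of feature `j` is therefore `2 - 𝔼 t_j` for every coalition, and because the
Shapley weights sum to one this is its Shapley value: `1 - p` for feature 0, `1 - q` for
feature 1. -/

section Shapley

variable {N : Type*} [Fintype N] [DecidableEq N]

theorem sum_shapley_weights_eq_one (i : N) :
    ∑ S ∈ (Finset.univ.erase i).powerset,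
      ((S.card.factorial : ℝ) * ((Fintype.card N - S.card - 1).factorial) /
        (Fintype.card N).factorial) = 1 := by
  obtain ⟨m, hm⟩ : ∃ m, Fintype.card N = m + 1 :=
    Nat.exists_eq_succ_of_ne_zero (Fintype.card_pos_iff.mpr ⟨i⟩).ne'
  have hcard : (Finset.univ.erase i).card = m := by
    rw [Finset.card_erase_of_mem (Finset.mem_univ i), Finset.card_univ, hm, Nat.add_sub_cancel]
  rw [Finset.sum_powerset_apply_card
    (fun k => (k.factorial : ℝ) * ((Fintype.card N - k - 1).factorial) /
      (Fintype.card N).factorial), hcard, hm]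
  -- the coalitions of size `k` weigh `C(m, k) k! (m - k)! / (m + 1)! = 1 / (m + 1)` in total
  have hterm : ∀ k ∈ Finset.range (m + 1),
      m.choose k • ((k.factorial : ℝ) * ((m + 1 - k - 1).factorial) / (m + 1).factorial)
        = 1 / (m + 1) := by
    intro k hk
    have hchoose : (m.choose k : ℝ) * k.factorial * (m - k).factorial = m.factorial := by
      exact_mod_cast Nat.choose_mul_factorial_mul_factorial (Finset.mem_range_succ_iff.mp hk)
    rw [nsmul_eq_mul, Nat.sub_right_comm, Nat.add_sub_cancel, Nat.factorial_succ, Nat.cast_mul,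
      ← mul_div_assoc, ← mul_assoc, hchoose]
    push_cast
    field_simp
  rw [Finset.sum_congr rfl hterm, Finset.sum_const, Finset.card_range, nsmul_eq_mul]
  push_cast
  field_simp

theorem shapley_eq_of_marginal_eq (v : Finset N → ℝ) (i : N) (c : ℝ)
    (hv : ∀ S, i ∉ S → v (insert i S) - v S = c) : shapley v i = c := by
  rw [shapley, ← mul_one c, ← sum_shapley_weights_eq_one i, Finset.mul_sum]
  refine Finset.sum_congr rfl fun S hS => ?_
  have hiS : i ∉ S := fun h => by simpa using Finset.mem_powerset.mp hS h
  rw [hv S hiS, mul_comm]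

end Shapley

section BinaryGrid

noncomputable def binaryGrid : Finset (Fin 2 → ℝ) := {![1,1], ![1,2], ![2,1], ![2,2]}

noncomputable def bernoulliProductWeight (p q : ℝ) : (Fin 2 → ℝ) → ℝ :=
  fun t => (if t 0 = 2 then p else 1 - p) * (if t 1 = 2 then q else 1 - q)

variable {p q : ℝ}

theorem condExp_binaryGrid_add (hp : p ≠ 0) (hq : q ≠ 0) (S : Finset (Fin 2)) :
    condExp binaryGrid (bernoulliProductWeight p q) (fun t => t 0 + t 1) ![2,2] S
      = (if 0 ∈ S then 2 else 1 + p) + (if 1 ∈ S then 2 else 1 + q) := by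
  obtain rfl | rfl | rfl | rfl : S = ∅ ∨ S = {0} ∨ S = {1} ∨ S = {0, 1} := by
    revert S; decide
  all_goals
    simp only [condExp, binaryGrid, bernoulliProductWeight, Finset.filter_insert,
        Finset.filter_singleton, Finset.sum_insert, Finset.sum_singleton, Finset.mem_insert,
        Finset.mem_singleton, Finset.notMem_empty, Matrix.vecCons_inj, Matrix.cons_val_zero,
        Matrix.cons_val_one, forall_eq, forall_eq_or_imp, IsEmpty.forall_iff, implies_true,
        OfNat.one_ne_ofNat, OfNat.ofNat_ne_one, one_ne_zero, zero_ne_one, and_true, and_false,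
        or_false, or_true, not_false_eq_true, if_true, if_false]
    rw [div_eq_iff (by ring_nf; simp [hp, hq])]
    ring

theorem ces_binaryGrid_add_zero (hp : p ≠ 0) (hq : q ≠ 0) :
    ces binaryGrid (bernoulliProductWeight p q) ![2,2] (fun t => t 0 + t 1) 0 = 1 - p := by
  refine shapley_eq_of_marginal_eq _ _ _ fun S hS => ?_
  simp only [condExp_binaryGrid_add hp hq, Finset.mem_insert, hS, ↓reduceIte, or_false, false_or,
    one_ne_zero]
  ring

theorem ces_binaryGrid_add_one (hp : p ≠ 0) (hq : q ≠ 0) :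
    ces binaryGrid (bernoulliProductWeight p q) ![2,2] (fun t => t 0 + t 1) 1 = 1 - q := by
  refine shapley_eq_of_marginal_eq _ _ _ fun S hS => ?_
  simp only [condExp_binaryGrid_add hp hq, Finset.mem_insert, hS, ↓reduceIte, or_false, false_or,
    zero_ne_one]
  ring

end BinaryGrid

theorem ces_fails_symmetry_general (p q : ℝ) (hp0 : 0 < p)
    (hq0 : 0 < q) (hpq : p ≠ q) :
    ces ({![1,1], ![1,2], ![2,1], ![2,2]} : Finset (Fin 2 → ℝ))
        (fun t => (if t 0 = 2 then p else 1 - p) * (if t 1 = 2 then q else 1 - q))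
        ![2,2] (fun t => t 0 + t 1) 0 = 1 - p ∧
    ces ({![1,1], ![1,2], ![2,1], ![2,2]} : Finset (Fin 2 → ℝ))
        (fun t => (if t 0 = 2 then p else 1 - p) * (if t 1 = 2 then q else 1 - q))
        ![2,2] (fun t => t 0 + t 1) 1 = 1 - q ∧
    ces ({![1,1], ![1,2], ![2,1], ![2,2]} : Finset (Fin 2 → ℝ))
        (fun t => (if t 0 = 2 then p else 1 - p) * (if t 1 = 2 then q else 1 - q))
        ![2,2] (fun t => t 0 + t 1) 0 ≠
      ces ({![1,1], ![1,2], ![2,1], ![2,2]} : Finset (Fin 2 → ℝ))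
        (fun t => (if t 0 = 2 then p else 1 - p) * (if t 1 = 2 then q else 1 - q))
        ![2,2] (fun t => t 0 + t 1) 1 := by
  have h0 := ces_binaryGrid_add_zero hp0.ne' hq0.ne'
  have h1 := ces_binaryGrid_add_one hp0.ne' hq0.ne'
  exact ⟨h0, h1, fun h => hpq (sub_right_injective (h0.symm.trans (h.trans h1)))⟩

/-- **CES fails Symmetry even for independent distributions** (Table 3 of the
paper): under the product distribution in which feature 1 is `2` w.p. `p`
(else `1`) and feature 2 is `2` w.p. `q` (else `1`), for the symmetric model
`f (u,v) = u + v` and the symmetric explicand `(2,2)`, the attributions are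
`1 - p` and `1 - q`, which are unequal whenever `p ≠ q`. -/
theorem ces_fails_symmetry (p q : ℝ) (hp0 : 0 < p) (hp1 : p < 1)
    (hq0 : 0 < q) (hq1 : q < 1) (hpq : p ≠ q) :
    ces ({![1,1], ![1,2], ![2,1], ![2,2]} : Finset (Fin 2 → ℝ))
        (fun t => (if t 0 = 2 then p else 1 - p) * (if t 1 = 2 then q else 1 - q))
        ![2,2] (fun t => t 0 + t 1) 0 = 1 - p ∧
    ces ({![1,1], ![1,2], ![2,1], ![2,2]} : Finset (Fin 2 → ℝ))
        (fun t => (if t 0 = 2 then p else 1 - p) * (if t 1 = 2 then q else 1 - q))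
        ![2,2] (fun t => t 0 + t 1) 1 = 1 - q ∧
    ces ({![1,1], ![1,2], ![2,1], ![2,2]} : Finset (Fin 2 → ℝ))
        (fun t => (if t 0 = 2 then p else 1 - p) * (if t 1 = 2 then q else 1 - q))
        ![2,2] (fun t => t 0 + t 1) 0 ≠
      ces ({![1,1], ![1,2], ![2,1], ![2,2]} : Finset (Fin 2 → ℝ))
        (fun t => (if t 0 = 2 then p else 1 - p) * (if t 1 = 2 then q else 1 - q))
        ![2,2] (fun t => t 0 + t 1) 1 :=
  ces_fails_symmetry_general p q hp0 hq0 hpq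
end

section
/- Integrated Gradients satisfies Efficiency (completeness): let f : ℝⁿ → ℝ be continuously differentiable, and let x, x' ∈ ℝⁿ. Then the Integrated Gradients attributions sum to the difference of function values: ∑_{i=1}^{n} (x_i − x'_i) · ∫₀¹ ∂f/∂x_i (x' + α·(x − x')) dα = f(x) − f(x'). -/
open scoped Classical

/-- **Integrated Gradients satisfies Efficiency (completeness)**: for a
continuously differentiable model `f`, the IG attributions along the
straight-line path from the baseline `x'` to the explicand `x` sum to
`f x - f x'`. -/
theorem ig_efficiency (n : ℕ) (f : (Fin n → ℝ) → ℝ) (hf : ContDiff ℝ 1 f)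
    (x x' : Fin n → ℝ) :
    ∑ i, (x i - x' i) *
        ∫ α in (0 : ℝ)..1,
          fderiv ℝ f (fun j => x' j + α * (x j - x' j)) (Pi.single i 1)
      = f x - f x' := by
  have hγc : Continuous (fun α : ℝ => (fun j => x' j + α * (x j - x' j))) := by
    apply continuous_pi
    intro j
    exact continuous_const.add (continuous_id.mul continuous_const)
  have hγd : ∀ t : ℝ,
      HasDerivAt (fun α : ℝ => (fun j => x' j + α * (x j - x' j))) (x - x') t := by
    intro t
    apply hasDerivAt_pi.2
    intro j
    simpa [mul_comm] using
      (((hasDerivAt_id t).const_mul (x j - x' j)).const_add (x' j))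
  have hfd : Differentiable ℝ f := hf.differentiable one_ne_zero
  have hfc : Continuous fun p => fderiv ℝ f p := hf.continuous_fderiv one_ne_zero
  have hcont : ∀ v : Fin n → ℝ,
      Continuous fun t : ℝ => fderiv ℝ f (fun j => x' j + t * (x j - x' j)) v :=
    fun v => ((ContinuousLinearMap.apply ℝ ℝ v).continuous.comp hfc).comp hγc
  calc
    ∑ i, (x i - x' i) *
        ∫ α in (0 : ℝ)..1,
          fderiv ℝ f (fun j => x' j + α * (x j - x' j)) (Pi.single i 1)
      = ∑ i, ∫ α in (0 : ℝ)..1, (x i - x' i) *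
          fderiv ℝ f (fun j => x' j + α * (x j - x' j)) (Pi.single i 1) := by
        refine Finset.sum_congr rfl fun i _ => ?_
        rw [intervalIntegral.integral_const_mul]
    _ = ∫ α in (0 : ℝ)..1, ∑ i, (x i - x' i) *
          fderiv ℝ f (fun j => x' j + α * (x j - x' j)) (Pi.single i 1) := by
        rw [intervalIntegral.integral_finset_sum]
        intro i _
        exact (continuous_const.mul (hcont (Pi.single i 1))).intervalIntegrable 0 1
    _ = ∫ α in (0 : ℝ)..1,
          fderiv ℝ f (fun j => x' j + α * (x j - x' j)) (x - x') := by
        congr 1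
        funext α
        have hx : (x - x') = ∑ i, (x i - x' i) • (Pi.single i 1 : Fin n → ℝ) := by
          funext j
          simp [Finset.sum_apply, Pi.single_apply]
        rw [hx, map_sum]
        exact Finset.sum_congr rfl fun i _ => by simp [mul_comm]
    _ = f x - f x' := by
        have h : ∀ t ∈ Set.uIcc (0:ℝ) 1,
            HasDerivAt (fun s : ℝ => f (fun j => x' j + s * (x j - x' j)))
              (fderiv ℝ f (fun j => x' j + t * (x j - x' j)) (x - x')) t := by
          intro t _
          exact ((hfd _).hasFDerivAt).comp_hasDerivAt t (hγd t)
        have := intervalIntegral.integral_eq_sub_of_hasDerivAt h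
          ((hcont (x - x')).intervalIntegrable 0 1)
        simpa using this
end

section
/- Symmetry is not redundant in Young's axiomatization of the Shapley value: On set functions v : (subsets of {1,2,3}) → ℝ, define the fixed-permutation marginal method m by m_i(v) = v({1,…,i}) − v({1,…,i−1}) for i = 1, 2, 3. Then m satisfies (a) Efficiency: ∑_{i=1}^{3} m_i(v) = v({1,2,3}) − v(∅) for all v; (b) Missingness/Dummy: if v(S ∪ {i}) = v(S) for all S, then m_i(v) = 0; and (c) Consistency/Strong Monotonicity: if v₂(S ∪ {i}) − v₂(S) ≥ v₁(S ∪ {i}) − v₁(S) for all S ⊆ {1,2,3} \ {i}, then m_i(v₂) ≥ m_i(v₁). Nevertheless, there exists a set function v such that m(v) differs from the Shapley value of v; hence Efficiency, Missingness and Consistency alone do not characterize the Shapley value. -/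
/-! The marginal method credits player `i` with its contribution to the coalition `Iio i` of its
predecessors, so efficiency telescopes, and missingness and strong monotonicity only need to be
checked at that one coalition. It is not symmetric, however: in the unanimity game of the grand
coalition it gives everything to the last player, while the Shapley value gives each player `1/3`. -/

open scoped Classical

/-- The fixed-permutation marginal method on three players: player `i`
receives its marginal contribution when players are added in the fixed order
`1, 2, 3`. -/
noncomputable def fixedPermMarginal (v : Finset (Fin 3) → ℝ) (i : Fin 3) : ℝ :=
  v (Finset.univ.filter fun j => j ≤ i) - v (Finset.univ.filter fun j => j < i)

open Finset

theorem shapley_unanimity_univ {N : Type*} [Fintype N] [DecidableEq N] (i : N) :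
    shapley (fun S => if S = univ then 1 else 0) i = 1 / Fintype.card N := by
  have ne_univ {S : Finset N} (h : i ∉ S) : S ≠ univ := fun hS => h (hS ▸ mem_univ i)
  obtain ⟨m, hm⟩ : ∃ m, Fintype.card N = m + 1 :=
    Nat.exists_eq_add_one.2 (Fintype.card_pos_iff.2 ⟨i⟩)
  rw [shapley, sum_eq_single_of_mem (univ.erase i) (mem_powerset_self _)]
  · rw [insert_erase (mem_univ i), if_pos rfl, if_neg (ne_univ (notMem_erase i _)),
      card_erase_of_mem (mem_univ i), card_univ, hm]
    simp only [Nat.add_sub_cancel, Nat.add_sub_cancel_left, Nat.sub_self, Nat.factorial_zero,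
      Nat.factorial_succ, sub_zero, mul_one]
    push_cast
    field_simp
  · intro S hS hne
    have hiS : i ∉ S := fun h => notMem_erase i _ (mem_powerset.1 hS h)
    have hins : insert i S ≠ univ := fun h => hne (by rw [← h, erase_insert hiS])
    rw [if_neg hins, if_neg (ne_univ hiS), sub_self, mul_zero]

theorem Fin.sum_Iic_sub_Iio {M : Type*} [AddCommGroup M] {n : ℕ} (v : Finset (Fin n) → M) :
    ∑ i, (v (Iic i) - v (Iio i)) = v univ - v ∅ := by
  set f : ℕ → M := fun k => v (univ.filter fun j : Fin n => (j : ℕ) < k)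
  have hIic (i : Fin n) : Iic i = univ.filter fun j : Fin n => (j : ℕ) < (i : ℕ) + 1 := by
    ext j; simp
  have hIio (i : Fin n) : Iio i = univ.filter fun j : Fin n => (j : ℕ) < i := by
    ext j; simp
  calc ∑ i : Fin n, (v (Iic i) - v (Iio i)) = ∑ i : Fin n, (f (i + 1) - f i) := by
        simp only [hIic, hIio, f]
    _ = f n - f 0 := by rw [Fin.sum_univ_eq_sum_range (fun i => f (i + 1) - f i), sum_range_sub]
    _ = v univ - v ∅ := by simp [f]

theorem fixedPermMarginal_eq (v : Finset (Fin 3) → ℝ) (i : Fin 3) :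
    fixedPermMarginal v i = v (insert i (Iio i)) - v (Iio i) := by
  rw [fixedPermMarginal, filter_ge_eq_Iic, filter_gt_eq_Iio, Iio_insert]

/-- **Symmetry is not redundant in Young's axiomatization of the Shapley
value** (Appendix of the paper): the fixed-permutation marginal method
satisfies Efficiency, Missingness/Dummy, and Consistency/Strong Monotonicity,
yet differs from the Shapley value on some set function. Hence these three
axioms alone do not characterize the Shapley value. -/
theorem symmetry_not_redundant :
    (∀ v : Finset (Fin 3) → ℝ,
      ∑ i, fixedPermMarginal v i = v Finset.univ - v ∅) ∧
    (∀ (v : Finset (Fin 3) → ℝ) (i : Fin 3),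
      (∀ S : Finset (Fin 3), v (insert i S) = v S) →
      fixedPermMarginal v i = 0) ∧
    (∀ (v₁ v₂ : Finset (Fin 3) → ℝ) (i : Fin 3),
      (∀ S : Finset (Fin 3), i ∉ S →
        v₁ (insert i S) - v₁ S ≤ v₂ (insert i S) - v₂ S) →
      fixedPermMarginal v₁ i ≤ fixedPermMarginal v₂ i) ∧
    (∃ (v : Finset (Fin 3) → ℝ) (i : Fin 3),
      fixedPermMarginal v i ≠ shapley v i) := by
  refine ⟨fun v => ?_, fun v i hv => ?_, fun v₁ v₂ i h => ?_, ?_⟩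
  · simpa only [fixedPermMarginal_eq, Iio_insert] using Fin.sum_Iic_sub_Iio v
  · rw [fixedPermMarginal_eq, hv, sub_self]
  · simpa only [fixedPermMarginal_eq] using h _ notMem_Iio_self
  · refine ⟨fun S => if S = univ then 1 else 0, 0, ?_⟩
    rw [shapley_unanimity_univ, fixedPermMarginal_eq]
    norm_num [show (Iio (0 : Fin 3)) = ∅ by decide, (univ_neq_empty (Fin 3)).symm]
end
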